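/- Let R_{ij} (i,j ∈ {1,2,3,4}, i ≠ j) be nonnegative integers, n1 a positive integer, and λ a positive integer. Suppose R_{13}+R_{34}+R_{41}+R_{12}+R_{32}+R_{42} = n1 + λ, together with R_{13} ≥ R_{31}+λ, R_{34} ≥ R_{43}+λ, R_{41} ≥ R_{14}+λ, R_{12} ≥ R_{21}, R_{32} ≥ R_{23}, R_{42} ≥ R_{24}, and suppose the tuple satisfies the relay-cut bound R_{31}+R_{34}+R_{32}+R_{41}+R_{42}+R_{12} ≤ n1. Then after the Detour-Scheme-1 modification R'_{41}=R_{41}−λ, R'_{43}=R_{43}+λ, R'_{31}=R_{31}+λ (other rates unchanged), the modified tuple satisfies both R'_{13}+R'_{34}+R'_{41}+R'_{12}+R'_{32}+R'_{42} ≤ n1 and the reverse-cycle condition R'_{31}+R'_{43}+R'_{14}+R'_{21}+R'_{23}+R'_{24} ≤ n1. -/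

import Mathlib

theorem stmt_12_general (R12 R13 R14 R21 R23 R24 R31 R32 R34 R41 R42 R43 : ℤ)
    (n1 lam : ℤ)
    (heq : R13 + R34 + R41 + R12 + R32 + R42 = n1 + lam)
    (hb1 : R31 + lam ≤ R13) (hb2 : R43 + lam ≤ R34) (hb3 : R14 + lam ≤ R41)
    (hc1 : R21 ≤ R12) (hc2 : R23 ≤ R32) (hc3 : R24 ≤ R42) :
    R13 + R34 + (R41 - lam) + R12 + R32 + R42 ≤ n1 ∧
      (R31 + lam) + (R43 + lam) + R14 + R21 + R23 + R24 ≤ n1 := by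
  have hforward : R13 + R34 + (R41 - lam) + R12 + R32 + R42 = n1 := by linarith
  refine ⟨hforward.le, ?_⟩
  calc (R31 + lam) + (R43 + lam) + R14 + R21 + R23 + R24
      ≤ R13 + R34 + (R41 - lam) + R12 + R32 + R42 := by
        gcongr ?_ + ?_ + ?_ + ?_ + ?_ + ?_
        exact le_sub_iff_add_le.mpr hb3
    _ = n1 := hforward

theorem stmt_12 (R12 R13 R14 R21 R23 R24 R31 R32 R34 R41 R42 R43 : ℤ)
    (hR : 0 ≤ R12 ∧ 0 ≤ R13 ∧ 0 ≤ R14 ∧ 0 ≤ R21 ∧ 0 ≤ R23 ∧ 0 ≤ R24 ∧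
          0 ≤ R31 ∧ 0 ≤ R32 ∧ 0 ≤ R34 ∧ 0 ≤ R41 ∧ 0 ≤ R42 ∧ 0 ≤ R43)
    (n1 lam : ℤ) (hn1 : 0 < n1) (hlam : 0 < lam)
    (heq : R13 + R34 + R41 + R12 + R32 + R42 = n1 + lam)
    (hb1 : R31 + lam ≤ R13) (hb2 : R43 + lam ≤ R34) (hb3 : R14 + lam ≤ R41)
    (hc1 : R21 ≤ R12) (hc2 : R23 ≤ R32) (hc3 : R24 ≤ R42)
    (hcut : R31 + R34 + R32 + R41 + R42 + R12 ≤ n1) :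
    R13 + R34 + (R41 - lam) + R12 + R32 + R42 ≤ n1 ∧
      (R31 + lam) + (R43 + lam) + R14 + R21 + R23 + R24 ≤ n1 :=
  stmt_12_general R12 R13 R14 R21 R23 R24 R31 R32 R34 R41 R42 R43 n1 lam heq hb1 hb2 hb3 hc1 hc2 hc3
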